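/- Every path-closed, GCD-tight, variable-bound-free harmonic SDBM (with divisors d_1 | d_2 | ⋯ | d_n and all congruence remainders zero) has an integer solution. -/

import Mathlib

open Classical in
noncomputable def ydef {n : ℕ} (c : Fin n → Fin n → ℤ) (e : Fin n → Fin n → Prop)
    (i : Fin n) : ℤ :=
  if hS : (Finset.univ.filter (fun j : Fin n => i < j ∧ e j i)).Nonempty then
    (Finset.univ.filter (fun j : Fin n => i < j ∧ e j i)).inf' hS
      (fun j => if h : i < j ∧ e j i then ydef c e j + c j i else 0)
  else if hT : (Finset.univ.filter (fun k : Fin n => i < k ∧ e i k)).Nonempty then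
    (Finset.univ.filter (fun k : Fin n => i < k ∧ e i k)).sup' hT
      (fun k => if h : i < k ∧ e i k then ydef c e k - c i k else 0)
  else 0
termination_by n - i.1
decreasing_by
  · have : i.1 < j.1 := h.1
    omega
  · have : i.1 < k.1 := h.1
    omega

open Classical in
lemma ydef_eq_min {n : ℕ} (c : Fin n → Fin n → ℤ) (e : Fin n → Fin n → Prop) {i : Fin n}
    (hS : (Finset.univ.filter (fun j : Fin n => i < j ∧ e j i)).Nonempty) :
    ydef c e i = (Finset.univ.filter (fun j : Fin n => i < j ∧ e j i)).inf' hS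
      (fun j => if h : i < j ∧ e j i then ydef c e j + c j i else 0) := by
  conv_lhs => rw [ydef]
  rw [dif_pos hS]

open Classical in
lemma ydef_eq_max {n : ℕ} (c : Fin n → Fin n → ℤ) (e : Fin n → Fin n → Prop) {i : Fin n}
    (hS : ¬ (Finset.univ.filter (fun j : Fin n => i < j ∧ e j i)).Nonempty)
    (hT : (Finset.univ.filter (fun k : Fin n => i < k ∧ e i k)).Nonempty) :
    ydef c e i = (Finset.univ.filter (fun k : Fin n => i < k ∧ e i k)).sup' hT
      (fun k => if h : i < k ∧ e i k then ydef c e k - c i k else 0) := by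
  conv_lhs => rw [ydef]
  rw [dif_neg hS, dif_pos hT]

open Classical in
lemma ydef_zero {n : ℕ} (c : Fin n → Fin n → ℤ) (e : Fin n → Fin n → Prop) {i : Fin n}
    (hS : ¬ (Finset.univ.filter (fun j : Fin n => i < j ∧ e j i)).Nonempty)
    (hT : ¬ (Finset.univ.filter (fun k : Fin n => i < k ∧ e i k)).Nonempty) :
    ydef c e i = 0 := by
  conv_lhs => rw [ydef]
  rw [dif_neg hS, dif_neg hT]

open Classical in
lemma ydef_min_le {n : ℕ} (c : Fin n → Fin n → ℤ) (e : Fin n → Fin n → Prop) {i j : Fin n}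
    (hj : i < j) (he : e j i) : ydef c e i ≤ ydef c e j + c j i := by
  have hjm : j ∈ Finset.univ.filter (fun j : Fin n => i < j ∧ e j i) := by
    simp only [Finset.mem_filter, Finset.mem_univ, true_and]; exact ⟨hj, he⟩
  rw [ydef_eq_min c e ⟨j, hjm⟩]
  have := Finset.inf'_le (b := j)
    (fun j => if h : i < j ∧ e j i then ydef c e j + c j i else 0) hjm
  rwa [dif_pos ⟨hj, he⟩] at this

open Classical in
lemma ydef_min_mem {n : ℕ} (c : Fin n → Fin n → ℤ) (e : Fin n → Fin n → Prop) {i : Fin n}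
    (hS : (Finset.univ.filter (fun j : Fin n => i < j ∧ e j i)).Nonempty) :
    ∃ j, i < j ∧ e j i ∧ ydef c e i = ydef c e j + c j i := by
  obtain ⟨b, hb, hval⟩ := Finset.exists_mem_eq_inf'
    hS (fun j => if h : i < j ∧ e j i then ydef c e j + c j i else 0)
  simp only [Finset.mem_filter, Finset.mem_univ, true_and] at hb
  refine ⟨b, hb.1, hb.2, ?_⟩
  rw [ydef_eq_min c e hS, hval, dif_pos hb]

open Classical in
lemma ydef_max_ge {n : ℕ} (c : Fin n → Fin n → ℤ) (e : Fin n → Fin n → Prop) {i k : Fin n}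
    (hS : ¬ (Finset.univ.filter (fun j : Fin n => i < j ∧ e j i)).Nonempty)
    (hk : i < k) (he : e i k) : ydef c e k - c i k ≤ ydef c e i := by
  have hkm : k ∈ Finset.univ.filter (fun k : Fin n => i < k ∧ e i k) := by
    simp only [Finset.mem_filter, Finset.mem_univ, true_and]; exact ⟨hk, he⟩
  rw [ydef_eq_max c e hS ⟨k, hkm⟩]
  have := Finset.le_sup' (b := k)
    (fun k => if h : i < k ∧ e i k then ydef c e k - c i k else 0) hkm
  rwa [dif_pos ⟨hk, he⟩] at this

open Classical in
lemma ydef_max_mem {n : ℕ} (c : Fin n → Fin n → ℤ) (e : Fin n → Fin n → Prop) {i : Fin n}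
    (hS : ¬ (Finset.univ.filter (fun j : Fin n => i < j ∧ e j i)).Nonempty)
    (hT : (Finset.univ.filter (fun k : Fin n => i < k ∧ e i k)).Nonempty) :
    ∃ k, i < k ∧ e i k ∧ ydef c e i = ydef c e k - c i k := by
  obtain ⟨b, hb, hval⟩ := Finset.exists_mem_eq_sup'
    hT (fun k => if h : i < k ∧ e i k then ydef c e k - c i k else 0)
  simp only [Finset.mem_filter, Finset.mem_univ, true_and] at hb
  refine ⟨b, hb.1, hb.2, ?_⟩
  rw [ydef_eq_max c e hS hT, hval, dif_pos hb]

/-- `PathWeight E u v W`: the potential graph of the constraint set `E`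
has a path from `u` to `v` of total weight `W`. -/
def PathWeight (n : ℕ) (E : Set (Fin n × Fin n × ℤ)) (u v : Fin n) (W : ℤ) : Prop :=
  ∃ (k : ℕ) (p : Fin (k + 1) → Fin n) (w : Fin k → ℤ),
    p 0 = u ∧ p (Fin.last k) = v ∧
    (∀ i : Fin k, (p i.castSucc, p i.succ, w i) ∈ E) ∧ ∑ i, w i = W


lemma pathWeight_single {n : ℕ} {E : Set (Fin n × Fin n × ℤ)} {u v : Fin n} {c : ℤ}
    (h : (u, v, c) ∈ E) : PathWeight n E u v c := by
  refine ⟨1, ![u, v], ![c], by simp, by simp [Fin.last], ?_, by simp⟩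
  intro i
  fin_cases i
  simpa using h

lemma pathWeight_two {n : ℕ} {E : Set (Fin n × Fin n × ℤ)} {u v w : Fin n} {c1 c2 : ℤ}
    (h1 : (u, v, c1) ∈ E) (h2 : (v, w, c2) ∈ E) : PathWeight n E u w (c1 + c2) := by
  refine ⟨2, ![u, v, w], ![c1, c2], by simp, by simp [Fin.last], ?_, by simp [Fin.sum_univ_two]⟩
  intro i
  fin_cases i
  · simpa using h1
  · simpa using h2

/-- Every path-closed, GCD-tight, variable-bound-free harmonic SDBM
(divisors `d 0 ∣ d 1 ∣ ⋯`, all congruence remainders zero) has an integer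
solution. -/
theorem hsdbm_path_closed_gcd_tight_sat (n : ℕ) (E : Set (Fin n × Fin n × ℤ))
    (d : Fin n → ℤ) (hd : ∀ i, 1 ≤ d i)
    (hharm : ∀ i j : Fin n, i ≤ j → d i ∣ d j)
    (hgcd : ∀ p ∈ E, (Int.gcd (d p.1) (d p.2.1) : ℤ) ∣ p.2.2)
    (hsat : ∃ x : Fin n → ℤ, ∀ p ∈ E, -x p.1 + x p.2.1 ≤ p.2.2)
    (hclosed : ∀ u v W, PathWeight n E u v W →
      ∃ c, (u, v, c) ∈ E ∧ ∀ W', PathWeight n E u v W' → c ≤ W') :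
    ∃ x : Fin n → ℤ, (∀ i, d i ∣ x i) ∧ ∀ p ∈ E, -x p.1 + x p.2.1 ≤ p.2.2 := by
  classical
  obtain ⟨x, hx⟩ := hsat
  have hself : ∀ (u : Fin n) (c : ℤ), (u, u, c) ∈ E → (0 : ℤ) ≤ c := by
    intro u c h
    have h2 : -x u + x u ≤ c := hx (u, u, c) h
    linarith
  set e : Fin n → Fin n → Prop := fun u v => ∃ c, (u, v, c) ∈ E with he
  have hmin : ∀ u v : Fin n, ∃ c : ℤ, e u v →
      ((u, v, c) ∈ E ∧ ∀ W, PathWeight n E u v W → c ≤ W) := by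
    intro u v
    by_cases h : e u v
    · obtain ⟨c0, hc0⟩ := h
      obtain ⟨c, hcE, hcm⟩ := hclosed u v c0 (pathWeight_single hc0)
      exact ⟨c, fun _ => ⟨hcE, hcm⟩⟩
    · exact ⟨0, fun h' => absurd h' h⟩
  choose cs hcs using hmin
  have hcsE : ∀ u v, e u v → (u, v, cs u v) ∈ E := fun u v h => (hcs u v h).1
  have hcs_le : ∀ u v (c : ℤ), (u, v, c) ∈ E → cs u v ≤ c := fun u v c h =>
    (hcs u v ⟨c, h⟩).2 c (pathWeight_single h)
  have htri : ∀ u v w : Fin n, e u v → e v w →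
      (u, w, cs u w) ∈ E ∧ cs u w ≤ cs u v + cs v w := by
    intro u v w h1 h2
    have hp := pathWeight_two (hcsE u v h1) (hcsE v w h2)
    have heuw : e u w := by
      obtain ⟨c, hc, -⟩ := hclosed u w _ hp
      exact ⟨c, hc⟩
    exact ⟨hcsE u w heuw, (hcs u w heuw).2 _ hp⟩
  have hdvd1 : ∀ u v : Fin n, u ≤ v → e u v → d u ∣ cs u v := by
    intro u v huv h
    have hg : (Int.gcd (d u) (d v) : ℤ) ∣ cs u v := hgcd (u, v, cs u v) (hcsE u v h)
    rwa [Int.gcd_eq_natAbs_left_iff_dvd.2 (hharm u v huv), Int.natAbs_of_nonneg (by linarith [hd u])] at hg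
  have hdvd2 : ∀ u v : Fin n, v ≤ u → e u v → d v ∣ cs u v := by
    intro u v hvu h
    have hg : (Int.gcd (d u) (d v) : ℤ) ∣ cs u v := hgcd (u, v, cs u v) (hcsE u v h)
    rwa [Int.gcd_eq_natAbs_right_iff_dvd.2 (hharm v u hvu), Int.natAbs_of_nonneg (by linarith [hd v])] at hg
  have key : ∀ t : ℕ,
      (∀ u : Fin n, n - t ≤ u.1 → d u ∣ ydef cs e u) ∧
      (∀ u v : Fin n, ∀ c : ℤ, n - t ≤ u.1 → n - t ≤ v.1 → (u, v, c) ∈ E →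
        -ydef cs e u + ydef cs e v ≤ c) := by
    intro t
    induction t with
    | zero =>
      exact ⟨fun u hu => absurd u.2 (by omega), fun u v c hu hv h => absurd u.2 (by omega)⟩
    | succ t IH =>
      by_cases hnt : n ≤ t
      · have hq : n - (t + 1) = n - t := by omega
        rw [hq]; exact IH
      · have hmn : n - (t + 1) < n := by omega
        have hmt : n - t = n - (t + 1) + 1 := by omega
        rw [hmt] at IH
        set m := n - (t + 1) with hm
        set i : Fin n := ⟨m, hmn⟩ with hi
        have hival : i.1 = m := rfl
        -- lower bound property
        have hlb : ∀ v : Fin n, i < v → e i v → ydef cs e v - cs i v ≤ ydef cs e i := by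
          intro v hv hev
          by_cases hS : (Finset.univ.filter (fun j : Fin n => i < j ∧ e j i)).Nonempty
          · obtain ⟨j, hij, hji, hval⟩ := ydef_min_mem cs e hS
            have h3 := htri j i v hji hev
            have h4 : -ydef cs e j + ydef cs e v ≤ cs j v := by
              refine IH.2 j v (cs j v) ?_ ?_ h3.1
              · have : i.1 < j.1 := hij
                omega
              · have : i.1 < v.1 := hv
                omega
            rw [hval]
            linarith [h3.2, h4]
          · exact ydef_max_ge cs e hS hv hev
        constructor
        · intro u hu
          by_cases hum : m + 1 ≤ u.1
          · exact IH.1 u hum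
          · have hui : u = i := Fin.ext (by omega)
            subst hui
            by_cases hS : (Finset.univ.filter (fun j : Fin n => i < j ∧ e j i)).Nonempty
            · obtain ⟨j, hij, hji, hval⟩ := ydef_min_mem cs e hS
              rw [hval]
              have hju : i.1 < j.1 := hij
              refine dvd_add (dvd_trans (hharm i j (le_of_lt hij)) (IH.1 j (by omega))) ?_
              exact hdvd2 j i (le_of_lt hij) hji
            · by_cases hT : (Finset.univ.filter (fun k : Fin n => i < k ∧ e i k)).Nonempty
              · obtain ⟨k, hik, hek, hval⟩ := ydef_max_mem cs e hS hT
                rw [hval]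
                have hku : i.1 < k.1 := hik
                refine dvd_sub (dvd_trans (hharm i k (le_of_lt hik)) (IH.1 k (by omega))) ?_
                exact hdvd1 i k (le_of_lt hik) hek
              · rw [ydef_zero cs e hS hT]
                exact dvd_zero _
        · intro u v c hu hv hc
          by_cases hum : m + 1 ≤ u.1 <;> by_cases hvm : m + 1 ≤ v.1
          · exact IH.2 u v c hum hvm hc
          · -- v = i, u above
            have hvi : v = i := Fin.ext (by omega)
            subst hvi
            have hiu : i < u := by
              show i.1 < u.1
              omega
            have h1 : ydef cs e i ≤ ydef cs e u + cs u i := ydef_min_le cs e hiu ⟨c, hc⟩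
            have h2 : cs u i ≤ c := hcs_le u i c hc
            linarith
          · -- u = i, v above
            have hui : u = i := Fin.ext (by omega)
            subst hui
            have hiv : i < v := by
              show i.1 < v.1
              omega
            have h1 : ydef cs e v - cs i v ≤ ydef cs e i := hlb v hiv ⟨c, hc⟩
            have h2 : cs i v ≤ c := hcs_le i v c hc
            linarith
          · have hui : u = i := Fin.ext (by omega)
            subst hui
            have hvi : v = i := Fin.ext (by omega)
            subst hvi
            have h0 := hself i c hc
            linarith
  refine ⟨ydef cs e, fun u => (key n).1 u (by omega), ?_⟩
  intro p hp
  obtain ⟨u, v, c⟩ := p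
  exact (key n).2 u v c (by omega) (by omega) hp
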